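/- arXiv:2109.07860 — 2 statements merged into one kernel-verified Lean document; each statement's English description precedes it below -/
import Mathlib

section
/- Let W be a standard one-dimensional Brownian motion, σ̄ > 0, and T > 0. For a ≠ 0, sup over progressively measurable processes v with values in [0, σ̄] of P(∫_0^T v_s dW_s = a) is at least Φ(|a|/(σ̄√T)), where Φ(y) = (2/√(2π)) ∫_y^∞ exp(-r²/2) dr, achieved by the control v_s = σ̄·1_{[0, τ_a]}(s), where τ_a = inf{t : σ̄W_t = a}. -/
open MeasureTheory ProbabilityTheory

noncomputable def Phi (x : ℝ) : ℝ :=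
  (2 / Real.sqrt (2 * Real.pi)) * ∫ r in Set.Ioi x, Real.exp (-r ^ 2 / 2)

structure IsStandardBrownianMotion {Ω : Type*} [MeasurableSpace Ω]
    (P : Measure Ω) (W : ℝ → Ω → ℝ) : Prop where
  isProb : IsProbabilityMeasure P
  meas : ∀ t : ℝ, Measurable (W t)
  init : ∀ ω, W 0 ω = 0
  cont : ∀ ω, Continuous fun t => W t ω
  gauss : ∀ s t : ℝ, 0 ≤ s → (h : s ≤ t) →
    Measure.map (fun ω => W t ω - W s ω) P = gaussianReal 0 ⟨t - s, by linarith⟩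
  indep : ∀ (n : ℕ) (t : Fin (n + 1) → ℝ), Monotone t → (∀ i, 0 ≤ t i) →
    iIndepFun
      (fun i : Fin n => fun ω => W (t i.succ) ω - W (t i.castSucc) ω) P

/-- The first hitting time `τ_a = inf {t ≥ 0 : σ W_t = a}` (junk value `0` if the
level is never hit; we only use it on the event where the level is hit). -/
noncomputable def hitTime {Ω : Type*} (σ : ℝ) (W : ℝ → Ω → ℝ) (a : ℝ) (ω : Ω) : ℝ :=
  sInf {t : ℝ | 0 ≤ t ∧ σ * W t ω = a}

open Set Filter Topology
open scoped NNReal ENNReal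

/-! The control `σ·1_{[0, τ_a]}` turns the integral into `σ W_{T ∧ τ_a}`, which equals `a` as soon
as `σ W` reaches `a` before `T`; replacing `W` by `sign(a) W`, it remains to show the reflection
principle `P(max_{[0,T]} W ≥ b) ≥ 2 P(W_T > b) = Φ(b/√T)` for `b > 0`.

Along the grid `kT/n`, split according to the first index `k` with `W_{kT/n} ≥ b`. The increment
`W_T - W_{kT/n}` is symmetric and independent of the path up to `kT/n`, so reflecting it maps
`{W_T < b}` onto `{W_T > 2 W_{kT/n} - b}`. The overshoot `W_{kT/n} - b` is at most the last grid
increment, which is below `ε` for fine grids by uniform continuity of the paths; hence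
`P(max W ≥ b) ≥ P(W_T > b) + P(W_T > b + 2ε)` for every `ε > 0`. -/

lemma hitTime_le_and_eq {Ω : Type*} {σ a : ℝ} {W : ℝ → Ω → ℝ} {ω : Ω}
    (hW : Continuous fun t => W t ω) {t : ℝ} (ht : 0 ≤ t) (hat : σ * W t ω = a) :
    hitTime σ W a ω ≤ t ∧ σ * W (hitTime σ W a ω) ω = a := by
  have hbdd : BddBelow {t : ℝ | 0 ≤ t ∧ σ * W t ω = a} := ⟨0, fun _ h => h.1⟩
  have hclosed : IsClosed {t : ℝ | 0 ≤ t ∧ σ * W t ω = a} :=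
    isClosed_Ici.inter (isClosed_eq (continuous_const.mul hW) continuous_const)
  exact ⟨csInf_le hbdd ⟨ht, hat⟩, (hclosed.csInf_mem ⟨t, ht, hat⟩ hbdd).2⟩

lemma ofReal_Phi_eq (y : ℝ) : ENNReal.ofReal (Phi y) = 2 * gaussianReal 0 1 (Ioi y) := by
  have hpdf : ∀ x, gaussianPDFReal 0 1 x = (√(2 * Real.pi))⁻¹ * Real.exp (-x ^ 2 / 2) := by
    intro x; simp [gaussianPDFReal]
  rw [gaussianReal_apply_eq_integral _ one_ne_zero, Phi, ← ENNReal.ofReal_ofNat,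
    ← ENNReal.ofReal_mul zero_le_two]
  simp_rw [hpdf]
  rw [integral_const_mul]
  congr 1
  ring

lemma gaussianReal_Ioi_eq {v : ℝ≥0} (hv : v ≠ 0) (b : ℝ) :
    gaussianReal 0 v (Ioi b) = gaussianReal 0 1 (Ioi (b / √v)) := by
  have hsv : 0 < √(v : ℝ) := Real.sqrt_pos.mpr (by positivity)
  have hmap : (gaussianReal 0 1).map (fun x => √(v : ℝ) * x) = gaussianReal 0 v := by
    rw [gaussianReal_map_const_mul, mul_zero, mul_one]
    congr
    exact Real.sq_sqrt v.2
  rw [← hmap, Measure.map_apply (by fun_prop) measurableSet_Ioi]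
  congr 1
  ext x
  simp [div_lt_iff₀' hsv]

def firstPassage (b : ℝ) (k : ℕ) : Set (ℕ → ℝ) := {x | b ≤ x k ∧ ∀ j < k, x j < b}

lemma measurableSet_firstPassage (b : ℝ) (k : ℕ) : MeasurableSet (firstPassage b k) := by
  have : firstPassage b k = {x | b ≤ x k} ∩ ⋂ j ∈ Finset.range k, {x | x j < b} := by
    ext x; simp [firstPassage]
  rw [this]
  exact (measurableSet_le measurable_const (measurable_pi_apply k)).inter
    (Finset.measurableSet_biInter _ fun j _ =>
      measurableSet_lt (measurable_pi_apply j) measurable_const)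

lemma disjoint_firstPassage {b : ℝ} {k l : ℕ} (hkl : k ≠ l) :
    Disjoint (firstPassage b k) (firstPassage b l) := by
  refine Set.disjoint_left.mpr fun x hk hl => ?_
  rcases hkl.lt_or_gt with h | h
  · exact (hl.2 k h).not_ge hk.1
  · exact (hk.2 l h).not_ge hl.1

lemma exists_mem_firstPassage {b : ℝ} {x : ℕ → ℝ} {n : ℕ} (hx : b ≤ x n) :
    ∃ k ≤ n, x ∈ firstPassage b k := by
  classical
  have hex : ∃ k, b ≤ x k := ⟨n, hx⟩
  exact ⟨Nat.find hex, Nat.find_min' hex hx, Nat.find_spec hex,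
    fun j hj => not_le.mp (Nat.find_min hex hj)⟩

lemma mem_firstPassage_stopped {b : ℝ} {x : ℕ → ℝ} {k : ℕ} :
    (fun j => x (min j k)) ∈ firstPassage b k ↔ x ∈ firstPassage b k := by
  simp +contextual [firstPassage, min_eq_left_of_lt]

lemma natCast_mul_div_mem_Icc {T : ℝ} (hT : 0 ≤ T) {k n : ℕ} (hkn : k ≤ n) :
    (k : ℝ) * T / n ∈ Icc 0 T := by
  refine ⟨by positivity, div_le_of_le_mul₀ (Nat.cast_nonneg n) hT ?_⟩
  rw [mul_comm]
  gcongr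

section

variable {Ω : Type*} [MeasurableSpace Ω] {P : Measure Ω}

lemma IndepFun.measure_neg_snd_mem [IsFiniteMeasure P] {E : Type*} [MeasurableSpace E]
    {Y : Ω → E} {R : Ω → ℝ} (hY : Measurable Y) (hR : Measurable R) (hInd : IndepFun Y R P)
    (hsym : P.map (fun ω => -R ω) = P.map R) {C : Set (E × ℝ)} (hC : MeasurableSet C) :
    P {ω | (Y ω, -R ω) ∈ C} = P {ω | (Y ω, R ω) ∈ C} := by
  have hInd' : IndepFun Y (fun ω => -R ω) P := hInd.comp measurable_id measurable_neg
  have hR' : Measurable fun ω => -R ω := hR.neg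
  change P ((fun ω => (Y ω, -R ω)) ⁻¹' C) = P ((fun ω => (Y ω, R ω)) ⁻¹' C)
  rw [← Measure.map_apply (hY.prodMk hR') hC, ← Measure.map_apply (hY.prodMk hR) hC,
    (indepFun_iff_map_prod_eq_prod_map_map hY.aemeasurable hR'.aemeasurable).mp hInd',
    (indepFun_iff_map_prod_eq_prod_map_map hY.aemeasurable hR.aemeasurable).mp hInd, hsym]

lemma indepFun_stoppedPath_increment {X : ℕ → Ω → ℝ} (hX : ∀ k, Measurable (X k))
    (hX0 : ∀ ω, X 0 ω = 0) {n k : ℕ} (hkn : k ≤ n)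
    (hind : iIndepFun (fun (i : Fin n) ω => X (i + 1) ω - X i ω) P) :
    IndepFun (fun ω j => X (min j k) ω) (fun ω => X n ω - X k ω) P := by
  set m : Fin n → MeasurableSpace Ω :=
    fun i => MeasurableSpace.comap (fun ω => X (i + 1) ω - X i ω) inferInstance
  have hincr : ∀ (S : Set (Fin n)) (i : ℕ) (hi : i < n), ⟨i, hi⟩ ∈ S →
      Measurable[⨆ j ∈ S, m j] (fun ω => X (i + 1) ω - X i ω) := fun S i hi hiS =>
    (comap_measurable _).mono (le_iSup₂ (f := fun j (_ : j ∈ S) => m j) _ hiS) le_rfl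
  have hsum : ∀ j ω, X j ω = ∑ i ∈ Finset.range j, (X (i + 1) ω - X i ω) := fun j ω => by
    rw [Finset.sum_range_sub (fun i => X i ω), hX0, sub_zero]
  -- the stopped path is a function of the increments before `k`, `X n - X k` of those after
  have hIndep := indep_iSup_of_disjoint (fun i => ((hX _).sub (hX _)).comap_le)
    ((iIndepFun_iff_iIndep _ _ _).mp hind) (S := {i | (i : ℕ) < k}) (T := {i | k ≤ (i : ℕ)})
    (Set.disjoint_left.mpr fun i (hi : (i : ℕ) < k) (hi' : k ≤ (i : ℕ)) => hi'.not_gt hi)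
  have hpath : Measurable[⨆ i ∈ {i : Fin n | (i : ℕ) < k}, m i]
      (fun ω j => X (min j k) ω) := by
    refine @measurable_pi_lambda _ _ _ (_) _ _ fun j => ?_
    simp_rw [hsum (min j k)]
    exact Finset.measurable_sum _ fun i hi =>
      have hik : i < k := by simp at hi; omega
      hincr _ i (by omega) hik
  have hlast : Measurable[⨆ i ∈ {i : Fin n | k ≤ (i : ℕ)}, m i] (fun ω => X n ω - X k ω) := by
    have : (fun ω => X n ω - X k ω) = fun ω => ∑ i ∈ Finset.Ico k n, (X (i + 1) ω - X i ω) := by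
      funext ω
      rw [Finset.sum_Ico_eq_sub _ hkn, ← hsum, ← hsum]
    rw [this]
    exact Finset.measurable_sum _ fun i hi =>
      have hki : k ≤ i ∧ i < n := by simpa using hi
      hincr _ i hki.2 hki.1
  rw [IndepFun_iff_Indep]
  exact indep_of_indep_of_le_right (indep_of_indep_of_le_left hIndep hpath.comap_le)
    hlast.comap_le

lemma measure_firstPassage_lt_eq [IsFiniteMeasure P] {X : ℕ → Ω → ℝ}
    (hX : ∀ k, Measurable (X k)) (hX0 : ∀ ω, X 0 ω = 0) {n k : ℕ} (hkn : k ≤ n)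
    (hind : iIndepFun (fun (i : Fin n) ω => X (i + 1) ω - X i ω) P)
    (hsym : P.map (fun ω => -(X n ω - X k ω)) = P.map (fun ω => X n ω - X k ω)) (b : ℝ) :
    P {ω | (fun j => X j ω) ∈ firstPassage b k ∧ X n ω < b}
      = P {ω | (fun j => X j ω) ∈ firstPassage b k ∧ X k ω - b < X n ω - X k ω} := by
  set C : Set ((ℕ → ℝ) × ℝ) := {p | p.1 ∈ firstPassage b k ∧ p.1 k - b < p.2}
  have hC : MeasurableSet C := ((measurableSet_firstPassage b k).preimage measurable_fst).inter
    (measurableSet_lt (by fun_prop) measurable_snd)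
  have hstop : ∀ ω, (fun j => X (min j k) ω) ∈ firstPassage b k ↔
      (fun j => X j ω) ∈ firstPassage b k :=
    fun ω => mem_firstPassage_stopped (x := fun j => X j ω)
  have h := IndepFun.measure_neg_snd_mem (R := fun ω => X n ω - X k ω)
    (measurable_pi_lambda _ fun j => hX (min j k)) ((hX n).sub (hX k))
    (indepFun_stoppedPath_increment hX hX0 hkn hind) hsym hC
  convert h using 2 <;> ext ω <;> simp only [C, mem_ofPred_eq, hstop, min_self]
  exact and_congr_right fun _ => by constructor <;> intro <;> linarith

lemma measure_firstPassage_lt_add_le [IsFiniteMeasure P] {X : ℕ → Ω → ℝ}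
    (hX : ∀ k, Measurable (X k)) (hX0 : ∀ ω, X 0 ω = 0) {n k : ℕ} (hkn : k ≤ n)
    (hind : iIndepFun (fun (i : Fin n) ω => X (i + 1) ω - X i ω) P)
    (hsym : P.map (fun ω => -(X n ω - X k ω)) = P.map (fun ω => X n ω - X k ω))
    {b : ℝ} (hb : 0 < b) (ε : ℝ) :
    P {ω | (fun j => X j ω) ∈ firstPassage b k ∧ b < X n ω} +
      P {ω | (fun j => X j ω) ∈ firstPassage b k ∧ b + 2 * ε < X n ω ∧
        ∀ j < n, X (j + 1) ω - X j ω ≤ ε}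
      ≤ P {ω | (fun j => X j ω) ∈ firstPassage b k} := by
  set A := {ω | (fun j => X j ω) ∈ firstPassage b k}
  -- the overshoot `X k - b` is at most the last jump `X k - X (k - 1)`, hence at most `ε`
  have hovershoot : {ω | ω ∈ A ∧ b + 2 * ε < X n ω ∧ ∀ j < n, X (j + 1) ω - X j ω ≤ ε} ⊆
      {ω | ω ∈ A ∧ X k ω - b < X n ω - X k ω} := by
    rintro ω ⟨hωA, hωn, hjump⟩
    obtain _ | j := k
    · have := hωA.1
      simp only [hX0] at this
      linarith
    · have := hjump j hkn
      have := hωA.2 j j.lt_succ_self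
      exact ⟨hωA, by linarith⟩
  calc _ ≤ P {ω | ω ∈ A ∧ b < X n ω} + P {ω | ω ∈ A ∧ X k ω - b < X n ω - X k ω} :=
        add_le_add_right (measure_mono hovershoot) _
    _ = P {ω | ω ∈ A ∧ b < X n ω} + P {ω | ω ∈ A ∧ X n ω < b} :=
        congrArg _ (measure_firstPassage_lt_eq hX hX0 hkn hind hsym b).symm
    _ = P ({ω | ω ∈ A ∧ b < X n ω} ∪ {ω | ω ∈ A ∧ X n ω < b}) :=
        (measure_union (disjoint_left.mpr fun ω h h' => h.2.not_gt h'.2)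
          ((measurableSet_firstPassage b k).preimage (measurable_pi_lambda _ hX) |>.inter
            (measurableSet_lt (hX n) measurable_const))).symm
    _ ≤ P A := measure_mono (union_subset (fun ω h => h.1) fun ω h => h.1)

lemma measure_lt_add_measure_lt_le_of_symmetric_increments [IsFiniteMeasure P] {X : ℕ → Ω → ℝ}
    (hX : ∀ k, Measurable (X k)) (hX0 : ∀ ω, X 0 ω = 0) {n : ℕ}
    (hind : iIndepFun (fun (i : Fin n) ω => X (i + 1) ω - X i ω) P)
    (hsym : ∀ k ≤ n, P.map (fun ω => -(X n ω - X k ω)) = P.map (fun ω => X n ω - X k ω))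
    {b ε : ℝ} (hb : 0 < b) (hε : 0 ≤ ε) :
    P {ω | b < X n ω} + P {ω | b + 2 * ε < X n ω} ≤
      P {ω | ∃ k ≤ n, b ≤ X k ω} + P {ω | ∃ k < n, ε < X (k + 1) ω - X k ω} := by
  set A : ℕ → Set Ω := fun k => {ω | (fun j => X j ω) ∈ firstPassage b k}
  set O := {ω | ∃ k < n, ε < X (k + 1) ω - X k ω}
  set E := {ω | b < X n ω}
  set F := {ω | b + 2 * ε < X n ω ∧ ∀ j < n, X (j + 1) ω - X j ω ≤ ε}
  set s := Finset.range (n + 1)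
  have hA : ∀ k, MeasurableSet (A k) := fun k =>
    (measurableSet_firstPassage b k).preimage (measurable_pi_lambda _ hX)
  have hAdisj : (s : Set ℕ).PairwiseDisjoint A := fun k _ l _ h =>
    (disjoint_firstPassage h).preimage _
  have hsplit : ∀ G ⊆ {ω | b ≤ X n ω}, P G = ∑ k ∈ s, P (A k ∩ G) := fun G hG => by
    have hcover : G ⊆ ⋃ k ∈ s, A k := fun ω hω => by
      obtain ⟨k, hkn, hk⟩ := exists_mem_firstPassage (x := fun j => X j ω) (n := n) (hG hω)
      exact mem_biUnion (Finset.mem_range_succ_iff.mpr hkn) hk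
    simp_rw [← Measure.restrict_apply (hA _)]
    rw [← measure_biUnion_finset hAdisj fun k _ => hA k,
      Measure.restrict_apply (Finset.measurableSet_biUnion s fun k _ => hA k),
      inter_eq_right.mpr hcover]
  calc P E + P {ω | b + 2 * ε < X n ω}
      ≤ P E + (P F + P O) := by
        gcongr
        refine (measure_mono fun ω h => ?_).trans (measure_union_le F O)
        by_cases hO : ω ∈ O
        · exact Or.inr hO
        · exact Or.inl ⟨h, fun j hj => not_lt.mp fun h' => hO ⟨j, hj, h'⟩⟩
    _ = ∑ k ∈ s, (P (A k ∩ E) + P (A k ∩ F)) + P O := by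
        rw [hsplit E fun ω (h : b < X n ω) => h.le,
          hsplit F fun ω (h : ω ∈ F) =>
            show b ≤ X n ω by linarith [(h.1 : b + 2 * ε < X n ω)],
          Finset.sum_add_distrib, add_assoc]
    _ ≤ P (⋃ k ∈ s, A k) + P O := by
        rw [measure_biUnion_finset hAdisj fun k _ => hA k]
        gcongr with k hk
        exact measure_firstPassage_lt_add_le hX hX0 (Finset.mem_range_succ_iff.mp hk) hind
          (hsym k (Finset.mem_range_succ_iff.mp hk)) hb ε
    _ ≤ P {ω | ∃ k ≤ n, b ≤ X k ω} + P O := by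
        gcongr
        exact iUnion₂_subset fun k hk ω hω => ⟨k, Finset.mem_range_succ_iff.mp hk, hω.1⟩

lemma tendsto_measure_exists_grid_increment_gt [IsFiniteMeasure P] {W : ℝ → Ω → ℝ}
    (hmeas : ∀ t, Measurable (W t)) (hcont : ∀ ω, Continuous fun t => W t ω)
    {T : ℝ} (hT : 0 ≤ T) {ε : ℝ} (hε : 0 < ε) :
    Tendsto (fun n : ℕ => P {ω | ∃ k < n, ε < W ((k + 1 : ℕ) * T / n) ω - W (k * T / n) ω})
      atTop (𝓝 0) := by
  rw [← measure_empty (μ := P)]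
  refine tendsto_measure_of_tendsto_indicator atTop (fun n => ?_) MeasurableSet.univ
    (measure_ne_top P univ) (Eventually.of_forall fun n => subset_univ _) fun ω => ?_
  · simp_rw [ofPred_exists]
    exact MeasurableSet.iUnion fun k => (MeasurableSet.const _).inter
      (measurableSet_lt measurable_const ((hmeas _).sub (hmeas _)))
  obtain ⟨δ, hδ, hunif⟩ := Metric.uniformContinuousOn_iff.mp
    (isCompact_Icc.uniformContinuousOn_of_continuous (hcont ω).continuousOn) ε hε
  obtain ⟨N, hN⟩ := exists_nat_gt (T / δ)
  have hN0 : (0 : ℝ) < N := lt_of_le_of_lt (by positivity) hN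
  refine eventually_atTop.mpr ⟨N, fun n hn => ?_⟩
  simp only [mem_ofPred_eq, mem_empty_iff_false, iff_false, not_exists, not_and, not_lt]
  intro k hk
  have hmesh : T / n < δ := calc
    T / n ≤ T / N := div_le_div_of_nonneg_left hT hN0 (by exact_mod_cast hn)
    _ < δ := (div_lt_iff₀ hN0).mpr (by rwa [div_lt_iff₀ hδ, mul_comm] at hN)
  have h := hunif _ (natCast_mul_div_mem_Icc hT hk) _ (natCast_mul_div_mem_Icc hT hk.le)
    (by rw [Real.dist_eq, Nat.cast_succ, ← sub_div, add_mul, one_mul, add_sub_cancel_left,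
      abs_of_nonneg (by positivity)]; exact hmesh)
  exact (le_abs_self _).trans (Real.dist_eq _ _ ▸ h).le

namespace IsStandardBrownianMotion

variable {W : ℝ → Ω → ℝ}

lemma const_mul (hW : IsStandardBrownianMotion P W) {c : ℝ} (hc : c ^ 2 = 1) :
    IsStandardBrownianMotion P (fun t ω => c * W t ω) where
  isProb := hW.isProb
  meas t := (hW.meas t).const_mul c
  init ω := by simp [hW.init ω]
  cont ω := (hW.cont ω).const_mul c
  gauss s t hs hst := by
    have h : (fun ω => c * W t ω - c * W s ω) = (c * ·) ∘ fun ω => W t ω - W s ω := by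
      funext ω; simp [mul_sub]
    have hd : Measurable fun ω => W t ω - W s ω := (hW.meas t).sub (hW.meas s)
    rw [h, ← Measure.map_map (measurable_const_mul c) hd,
      hW.gauss s t hs hst]
    refine (gaussianReal_map_const_mul c).trans ?_
    congr 1
    · exact mul_zero c
    · rw [show NNReal.mk (c ^ 2) (sq_nonneg c) = 1 from NNReal.eq hc]
      exact one_mul _
  indep n t hmono hpos := by
    convert (hW.indep n t hmono hpos).comp (fun _ x => c * x) (fun _ => measurable_const_mul c)
      using 2 with i
    funext ω
    simp [mul_sub]

lemma map_neg_sub (hW : IsStandardBrownianMotion P W) {s t : ℝ} (hs : 0 ≤ s) (hst : s ≤ t) :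
    P.map (fun ω => -(W t ω - W s ω)) = P.map (fun ω => W t ω - W s ω) := by
  have hd : Measurable fun ω => W t ω - W s ω := (hW.meas t).sub (hW.meas s)
  rw [show (fun ω => -(W t ω - W s ω)) = (fun x => -x) ∘ fun ω => W t ω - W s ω from rfl,
    ← Measure.map_map measurable_neg hd,
    hW.gauss s t hs hst]
  exact gaussianReal_map_neg.trans (by rw [neg_zero])

lemma measure_lt (hW : IsStandardBrownianMotion P W) {T : ℝ} (hT : 0 ≤ T) (b : ℝ) :
    P {ω | b < W T ω} = gaussianReal 0 ⟨T, hT⟩ (Ioi b) := by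
  have h := hW.gauss 0 T le_rfl hT
  simp only [hW.init, sub_zero] at h
  rw [← h, Measure.map_apply (hW.meas T) measurableSet_Ioi]
  rfl

lemma two_mul_measure_lt_le (hW : IsStandardBrownianMotion P W) {T b : ℝ} (hT : 0 < T)
    (hb : 0 < b) : 2 * P {ω | b < W T ω} ≤ P {ω | ∃ t ∈ Icc 0 T, b ≤ W t ω} := by
  have := hW.isProb
  set M := {ω | ∃ t ∈ Icc 0 T, b ≤ W t ω}
  have hgrid : ∀ n ≥ 1, ∀ ε ≥ 0, P {ω | b < W T ω} + P {ω | b + 2 * ε < W T ω} ≤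
      P M + P {ω | ∃ k < n, ε < W ((k + 1 : ℕ) * T / n) ω - W (k * T / n) ω} := by
    intro n hn ε hε
    have hTn : (n : ℝ) * T / n = T := by field_simp
    have hmono : Monotone fun i : Fin (n + 1) => (i : ℝ) * T / n := fun i j hij =>
      div_le_div_of_nonneg_right (mul_le_mul_of_nonneg_right (by exact_mod_cast hij) hT.le)
        n.cast_nonneg
    have h := measure_lt_add_measure_lt_le_of_symmetric_increments (X := fun k ω => W (k * T / n) ω)
      (fun k => hW.meas _) (fun ω => by simpa using hW.init ω)
      (hW.indep n _ hmono fun i => by positivity)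
      (fun k hk => hW.map_neg_sub (natCast_mul_div_mem_Icc hT.le hk).1
        ((natCast_mul_div_mem_Icc hT.le hk).2.trans hTn.ge)) hb hε
    simp only [hTn] at h
    refine h.trans (add_le_add_left (measure_mono ?_) _)
    rintro ω ⟨k, hk, hbk⟩
    exact ⟨_, natCast_mul_div_mem_Icc hT.le hk, hbk⟩
  have hlim : ∀ ε > 0, P {ω | b < W T ω} + P {ω | b + 2 * ε < W T ω} ≤ P M := fun ε hε =>
    ge_of_tendsto (by simpa using
      (tendsto_measure_exists_grid_increment_gt hW.meas hW.cont hT.le hε).const_add (P M))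
      (eventually_atTop.mpr ⟨1, fun n hn => hgrid n hn ε hε.le⟩)
  set E : ℕ → Set Ω := fun m => {ω | b + 2 * (1 / ((m : ℝ) + 1)) < W T ω}
  have hmono : Monotone E := fun m m' h ω hω =>
    lt_of_le_of_lt (by gcongr) (show b + 2 * (1 / ((m : ℝ) + 1)) < W T ω from hω)
  have hunion : ⋃ m, E m = {ω | b < W T ω} := by
    ext ω
    simp only [E, mem_iUnion, mem_ofPred_eq]
    refine ⟨fun ⟨m, hm⟩ => lt_of_le_of_lt (by simp; positivity) hm, fun h => ?_⟩
    obtain ⟨m, hm⟩ := exists_nat_one_div_lt (half_pos (sub_pos.mpr h))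
    exact ⟨m, by linarith⟩
  calc 2 * P {ω | b < W T ω} = P {ω | b < W T ω} + ⨆ m, P (E m) := by
        rw [two_mul, ← hmono.measure_iUnion, hunion]
    _ = ⨆ m, (P {ω | b < W T ω} + P (E m)) := ENNReal.add_iSup _
    _ ≤ P M := iSup_le fun m => hlim _ (by positivity)

lemma ofReal_Phi_le_measure_exists_eq (hW : IsStandardBrownianMotion P W) {T b : ℝ}
    (hT : 0 < T) (hb : 0 < b) :
    ENNReal.ofReal (Phi (b / √T)) ≤ P {ω | ∃ t ∈ Icc 0 T, W t ω = b} := by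
  have hTv : (⟨T, hT.le⟩ : ℝ≥0) ≠ 0 := fun h => hT.ne' (congrArg NNReal.toReal h)
  calc ENNReal.ofReal (Phi (b / √T)) = 2 * P {ω | b < W T ω} := by
        rw [ofReal_Phi_eq, hW.measure_lt hT.le, gaussianReal_Ioi_eq hTv]
        rfl
    _ ≤ P {ω | ∃ t ∈ Icc 0 T, b ≤ W t ω} := hW.two_mul_measure_lt_le hT hb
    _ ≤ P {ω | ∃ t ∈ Icc 0 T, W t ω = b} := measure_mono fun ω ⟨t, ht, hbt⟩ => by
        obtain ⟨s, hs, hWs⟩ := intermediate_value_Icc ht.1 (hW.cont ω).continuousOn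
          (show b ∈ Icc (W 0 ω) (W t ω) from ⟨(hW.init ω).symm ▸ hb.le, hbt⟩)
        exact ⟨s, ⟨hs.1, hs.2.trans ht.2⟩, hWs⟩

end IsStandardBrownianMotion

end

/-- Mathlib has no stochastic integral: the Itô integral `v ↦ ∫_0^T v_s dW_s` is an abstract map
`I`, constrained only on the stopped control `σ·1_{[0, τ_a]}` by `hI`. -/
theorem stmt_7 {Ω : Type*} [MeasurableSpace Ω] (P : Measure Ω) (W : ℝ → Ω → ℝ)
    (hW : IsStandardBrownianMotion P W) (σ a T : ℝ) (hσ : 0 < σ)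
    (ha : a ≠ 0) (hT : 0 < T)
    (I : (ℝ → Ω → ℝ) → Ω → ℝ)
    (hI : ∀ ω : Ω,
      I (fun s ω' => if s ≤ hitTime σ W a ω' then σ else 0) ω
        = σ * W (min T (hitTime σ W a ω)) ω) :
    ENNReal.ofReal (Phi (|a| / (σ * Real.sqrt T))) ≤
      ⨆ v ∈ {v : ℝ → Ω → ℝ | ∀ s ω, v s ω ∈ Set.Icc 0 σ},
        P {ω | I v ω = a} := by
  have hstop : (fun s ω' => if s ≤ hitTime σ W a ω' then σ else 0) ∈
      {v : ℝ → Ω → ℝ | ∀ s ω, v s ω ∈ Set.Icc 0 σ} := fun s ω => by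
    dsimp only
    split_ifs <;> simp [hσ.le]
  refine le_trans ?_ (le_biSup (fun v => P {ω | I v ω = a}) hstop)
  simp only [hI]
  have hc : (|a| / a) ^ 2 = 1 := by rw [div_pow, sq_abs, div_self (pow_ne_zero 2 ha)]
  -- `σ W_t = a` is the level `|a| / σ` for the Brownian motion `sign(a) W`
  have hlevel : ∀ t ω, |a| / a * W t ω = |a| / σ → σ * W t ω = a := fun t ω h => by
    rw [div_mul_eq_mul_div, div_eq_div_iff ha hσ.ne', mul_assoc,
      mul_right_inj' (abs_ne_zero.mpr ha)] at h
    linarith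
  calc ENNReal.ofReal (Phi (|a| / (σ * √T))) = ENNReal.ofReal (Phi (|a| / σ / √T)) := by
        rw [div_div]
    _ ≤ P {ω | ∃ t ∈ Icc 0 T, |a| / a * W t ω = |a| / σ} :=
        (hW.const_mul hc).ofReal_Phi_le_measure_exists_eq hT (div_pos (abs_pos.mpr ha) hσ)
    _ ≤ P {ω | σ * W (min T (hitTime σ W a ω)) ω = a} := measure_mono fun ω ⟨t, ht, h⟩ => by
        obtain ⟨hle, heq⟩ := hitTime_le_and_eq (hW.cont ω) ht.1 (hlevel t ω h)
        rwa [mem_ofPred_eq, min_eq_right (hle.trans ht.2)]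
end

section
/- Let c be a monotone, subadditive set function on the Borel sets of a topological space that arises as c(D) = sup_{P ∈ 𝒫} P(D) for a weakly compact family 𝒫 of Borel probability measures. Then for any decreasing sequence of closed sets F_n ↓ F, c(F_n) ↓ c(F). -/
/-!
By the portmanteau theorem, `P ↦ P F` is upper semicontinuous on probability measures for closed
`F`. For an antitone sequence of upper semicontinuous functions on a compact set, the infimum of
the maxima is the maximum of the pointwise infimum: the superlevel sets at the level
`⨅ n, max f_n` are closed, decreasing and meet the compact set (each `f_n` attains its maximum),
so by compactness they share a point. Applied to `f_n P = P (F n)`, with `P (⋂ F n) = ⨅ P (F n)`,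
this identifies the limit of the upper capacities.
-/

open MeasureTheory Filter Set

theorem ProbabilityMeasure.upperSemicontinuous_apply_of_isClosed {Ω : Type*}
    [MeasurableSpace Ω] [TopologicalSpace Ω] [OpensMeasurableSpace Ω] [HasOuterApproxClosed Ω]
    {F : Set Ω} (hF : IsClosed F) :
    UpperSemicontinuous fun P : ProbabilityMeasure Ω => (P : Measure Ω) F :=
  upperSemicontinuous_iff_limsup_le.2 fun _ =>
    ProbabilityMeasure.limsup_measure_closed_le_of_tendsto tendsto_id hF

theorem IsCompact.iInf_iSup_eq_iSup_iInf {X α : Type*} [TopologicalSpace X]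
    [CompleteLinearOrder α] {K : Set X} (hK : IsCompact K) {f : ℕ → X → α}
    (hf : ∀ n, UpperSemicontinuous (f n)) (hanti : Antitone f) :
    ⨅ n, ⨆ x ∈ K, f n x = ⨆ x ∈ K, ⨅ n, f n x := by
  refine le_antisymm ?_ (iSup₂_le fun x hx => le_iInf fun n => (iInf_le _ n).trans
    (le_iSup₂ (f := fun x _ => f n x) x hx))
  rcases K.eq_empty_or_nonempty with rfl | hKne
  · simp
  set a := ⨅ n, ⨆ x ∈ K, f n x
  have hmeet : ∀ n, (K ∩ f n ⁻¹' Ici a).Nonempty := fun n => by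
    obtain ⟨x, hxK, hmax⟩ := ((hf n).upperSemicontinuousOn K).exists_isMaxOn hKne hK
    exact ⟨x, hxK, (iInf_le _ n).trans (iSup₂_le fun y hy => hmax hy)⟩
  have hdir : Directed (· ⊇ ·) fun n => f n ⁻¹' Ici a :=
    Antitone.directed_ge fun _ _ hmn _ hx => le_trans hx (hanti hmn _)
  obtain ⟨x, hxK, hx⟩ : (K ∩ ⋂ n, f n ⁻¹' Ici a).Nonempty := by
    by_contra! hempty
    obtain ⟨n, hn⟩ := hK.elim_directed_family_closed _ (fun n => (hf n).isClosed_preimage a)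
      hempty hdir
    exact (hmeet n).ne_empty hn
  exact le_iSup₂_of_le x hxK (le_iInf (mem_iInter.1 hx))

theorem stmt_10_general {Ω : Type*} [MetricSpace Ω] [MeasurableSpace Ω] [BorelSpace Ω]
    (Pset : Set (ProbabilityMeasure Ω)) (hcomp : IsCompact Pset)
    (F : ℕ → Set Ω) (hclosed : ∀ n, IsClosed (F n)) (hanti : Antitone F) :
    Antitone (fun n => ⨆ P ∈ Pset, (P : Measure Ω) (F n)) ∧
    Filter.Tendsto (fun n => ⨆ P ∈ Pset, (P : Measure Ω) (F n)) Filter.atTop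
      (nhds (⨆ P ∈ Pset, (P : Measure Ω) (⋂ n, F n))) := by
  have hc_anti : Antitone fun n => ⨆ P ∈ Pset, (P : Measure Ω) (F n) :=
    fun _ _ hmn => iSup₂_mono fun _ _ => measure_mono (hanti hmn)
  have hlimit : ⨅ n, ⨆ P ∈ Pset, (P : Measure Ω) (F n) =
      ⨆ P ∈ Pset, (P : Measure Ω) (⋂ n, F n) := by
    rw [hcomp.iInf_iSup_eq_iSup_iInf
      (fun n => ProbabilityMeasure.upperSemicontinuous_apply_of_isClosed (hclosed n))
      fun _ _ hmn P => measure_mono (hanti hmn)]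
    exact iSup_congr fun P => iSup_congr fun _ => (hanti.measure_iInter
      (fun n => (hclosed n).measurableSet.nullMeasurableSet) ⟨0, measure_ne_top _ _⟩).symm
  exact ⟨hc_anti, hlimit ▸ tendsto_atTop_iInf hc_anti⟩

theorem stmt_10 {Ω : Type*} [MetricSpace Ω] [MeasurableSpace Ω] [BorelSpace Ω]
    (Pset : Set (ProbabilityMeasure Ω)) (hPset : Pset.Nonempty) (hcomp : IsCompact Pset)
    (F : ℕ → Set Ω) (hclosed : ∀ n, IsClosed (F n)) (hanti : Antitone F) :
    Antitone (fun n => ⨆ P ∈ Pset, (P : Measure Ω) (F n)) ∧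
    Filter.Tendsto (fun n => ⨆ P ∈ Pset, (P : Measure Ω) (F n)) Filter.atTop
      (nhds (⨆ P ∈ Pset, (P : Measure Ω) (⋂ n, F n))) :=
  stmt_10_general Pset hcomp F hclosed hanti
end
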